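/- Let Q(G) = D + A be the signless Laplacian of a signed graph G on n vertices and for each l let Q(H_l) be the signless Laplacian of H_l on t_l vertices with marking vector v_l. Then the signless Laplacian of the generalized corona product has block form [[Q(G) + V, PQ],[(PQ)ᵀ, D_Q + I]] and det(βI − Q(G∘ΛH_l)) = (∏_{l=1}^n det((β−1)I − Q(H_l))) · det(diag(β − t_l − χ_{Q,l}(β)) − Q(G)), where χ_{Q,l}(β) = v_lᵀ((β−1)I − Q(H_l))⁻¹v_l, for all β making each (β−1)I − Q(H_l) invertible. -/
import Mathlib

open Matrix BigOperators

/-- Reindexing equivalence peeling off the first block of a sigma type over `Fin (n+1)`. -/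
def sigmaFinSuccEquiv {n : ℕ} (t : Fin (n + 1) → ℕ) :
    (Σ l : Fin (n + 1), Fin (t l)) ≃ (Fin (t 0) ⊕ Σ l : Fin n, Fin (t l.succ)) where
  toFun p := Fin.cases (motive := fun l => Fin (t l) → (Fin (t 0) ⊕ Σ l : Fin n, Fin (t l.succ)))
    (fun a => Sum.inl a) (fun l a => Sum.inr ⟨l, a⟩) p.1 p.2
  invFun := Sum.elim (fun a => ⟨0, a⟩) (fun p => ⟨p.1.succ, p.2⟩)
  left_inv := by
    rintro ⟨l, a⟩
    induction l using Fin.cases <;> simp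
  right_inv := by
    rintro (a | ⟨l, a⟩) <;> simp

/-- Determinant of a dependent block diagonal matrix over `Fin n`. -/
theorem det_blockDiagonal'_fin : ∀ {n : ℕ} (t : Fin n → ℕ)
    (M : ∀ l, Matrix (Fin (t l)) (Fin (t l)) ℝ),
    (Matrix.blockDiagonal' M).det = ∏ l, (M l).det := by
  intro n
  induction n with
  | zero =>
      intro t M
      rw [Matrix.det_isEmpty, Finset.univ_eq_empty, Finset.prod_empty]
  | succ n ih =>
      intro t M
      have key : ((Matrix.blockDiagonal' M).submatrix (sigmaFinSuccEquiv t).symm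
          (sigmaFinSuccEquiv t).symm)
          = Matrix.fromBlocks (M 0) 0 0 (Matrix.blockDiagonal' (fun l : Fin n => M l.succ)) := by
        ext i j
        rcases i with a | ⟨l, a⟩ <;> rcases j with b | ⟨m, b⟩
        · simp [sigmaFinSuccEquiv]
        · simp [sigmaFinSuccEquiv,
            Matrix.blockDiagonal'_apply_ne _ _ _ (Fin.succ_ne_zero m).symm]
        · simp [sigmaFinSuccEquiv,
            Matrix.blockDiagonal'_apply_ne _ _ _ (Fin.succ_ne_zero l)]
        · by_cases h : l = m
          · subst h
            simp [sigmaFinSuccEquiv]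
          · simp [sigmaFinSuccEquiv,
              Matrix.blockDiagonal'_apply_ne _ _ _ (fun hh => h (Fin.succ_injective _ hh)),
              Matrix.blockDiagonal'_apply_ne _ _ _ h]
      calc (Matrix.blockDiagonal' M).det
          = ((Matrix.blockDiagonal' M).submatrix (sigmaFinSuccEquiv t).symm
              (sigmaFinSuccEquiv t).symm).det := (Matrix.det_submatrix_equiv_self _ _).symm
        _ = (M 0).det * (Matrix.blockDiagonal' (fun l : Fin n => M l.succ)).det := by
              rw [key, Matrix.det_fromBlocks_zero₂₁]
        _ = ∏ l, (M l).det := by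
              rw [ih _ (fun l : Fin n => M l.succ), Fin.prod_univ_succ]

/-- Factorization of the signed signless Laplacian characteristic polynomial of
the generalized corona product, via the Q-signed coronals
`χ_{Q,l}(β) = v_lᵀ ((β-1)I - Q(H_l))⁻¹ v_l`. -/
theorem corona_signless_laplacian_charpoly {n : ℕ} (t : Fin n → ℕ)
    (QG : Matrix (Fin n) (Fin n) ℝ)
    (QH : ∀ l, Matrix (Fin (t l)) (Fin (t l)) ℝ)
    (v : ∀ l, Fin (t l) → ℝ) (μ : Fin n → ℝ)
    (hQG : QG.IsSymm) (hQH : ∀ l, (QH l).IsSymm)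
    (hμ : ∀ i, μ i = 1 ∨ μ i = -1) (hv : ∀ l j, v l j = 1 ∨ v l j = -1)
    (β : ℝ)
    (hinv : ∀ l, IsUnit ((β - 1) • (1 : Matrix (Fin (t l)) (Fin (t l)) ℝ) - QH l).det) :
    (β • (1 : Matrix (Fin n ⊕ (Σ l, Fin (t l))) (Fin n ⊕ (Σ l, Fin (t l))) ℝ) -
      Matrix.fromBlocks
        (QG + Matrix.diagonal (fun l => (t l : ℝ)))
        (Matrix.of fun i (p : Σ l, Fin (t l)) => if i = p.1 then μ i * v p.1 p.2 else 0)
        (Matrix.of fun (p : Σ l, Fin (t l)) i => if i = p.1 then μ i * v p.1 p.2 else 0)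
        (Matrix.blockDiagonal' QH + 1)).det
    = (∏ l, ((β - 1) • (1 : Matrix (Fin (t l)) (Fin (t l)) ℝ) - QH l).det) *
      (Matrix.diagonal (fun l => β - (t l : ℝ) -
          v l ⬝ᵥ (((β - 1) • (1 : Matrix (Fin (t l)) (Fin (t l)) ℝ) - QH l)⁻¹ *ᵥ v l))
        - QG).det := by
  classical
  set Dl : ∀ l, Matrix (Fin (t l)) (Fin (t l)) ℝ := fun l => (β - 1) • 1 - QH l with hDl
  set Dinv : ∀ l, Matrix (Fin (t l)) (Fin (t l)) ℝ := fun l => (Dl l)⁻¹ with hDinv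
  set B : Matrix (Fin n) (Σ l, Fin (t l)) ℝ :=
    Matrix.of fun i (p : Σ l, Fin (t l)) => if i = p.1 then μ i * v p.1 p.2 else 0 with hBdef
  set C : Matrix (Σ l, Fin (t l)) (Fin n) ℝ :=
    Matrix.of fun (p : Σ l, Fin (t l)) i => if i = p.1 then μ i * v p.1 p.2 else 0 with hCdef
  -- invertibility of the block diagonal
  have hmul : Matrix.blockDiagonal' Dl * Matrix.blockDiagonal' Dinv = 1 := by
    rw [← Matrix.blockDiagonal'_mul]
    have : (fun l => Dl l * Dinv l) = fun l => (1 : Matrix (Fin (t l)) (Fin (t l)) ℝ) :=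
      funext fun l => Matrix.mul_nonsing_inv _ (hinv l)
    rw [this]; exact Matrix.blockDiagonal'_one
  have hmul' : Matrix.blockDiagonal' Dinv * Matrix.blockDiagonal' Dl = 1 := by
    rw [← Matrix.blockDiagonal'_mul]
    have : (fun l => Dinv l * Dl l) = fun l => (1 : Matrix (Fin (t l)) (Fin (t l)) ℝ) :=
      funext fun l => Matrix.nonsing_inv_mul _ (hinv l)
    rw [this]; exact Matrix.blockDiagonal'_one
  letI : Invertible (Matrix.blockDiagonal' Dl) := ⟨Matrix.blockDiagonal' Dinv, hmul', hmul⟩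
  -- rewrite the big matrix as a block matrix
  have hblock : β • (1 : Matrix (Fin n ⊕ (Σ l, Fin (t l))) (Fin n ⊕ (Σ l, Fin (t l))) ℝ) -
      Matrix.fromBlocks (QG + Matrix.diagonal (fun l => (t l : ℝ))) B C
        (Matrix.blockDiagonal' QH + 1)
      = Matrix.fromBlocks
          (β • 1 - (QG + Matrix.diagonal (fun l => (t l : ℝ)))) (-B) (-C)
          (Matrix.blockDiagonal' Dl) := by
    have hD : Matrix.blockDiagonal' Dl
        = β • (1 : Matrix (Σ l, Fin (t l)) (Σ l, Fin (t l)) ℝ)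
          - (Matrix.blockDiagonal' QH + 1) := by
      have : Matrix.blockDiagonal' Dl
          = (β - 1) • (1 : Matrix (Σ l, Fin (t l)) (Σ l, Fin (t l)) ℝ)
            - Matrix.blockDiagonal' QH := by
        rw [hDl, show (fun l => (β - 1) • (1 : Matrix (Fin (t l)) (Fin (t l)) ℝ) - QH l)
            = ((β - 1) • (1 : ∀ l, Matrix (Fin (t l)) (Fin (t l)) ℝ) - QH) from rfl,
          Matrix.blockDiagonal'_sub, Matrix.blockDiagonal'_smul, Matrix.blockDiagonal'_one]
      rw [this, sub_smul, one_smul]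
      abel
    rw [hD, ← Matrix.fromBlocks_one, Matrix.fromBlocks_smul]
    ext i j
    rcases i with i | p <;> rcases j with j | q <;>
      simp [Matrix.sub_apply]
  rw [hblock, Matrix.det_fromBlocks₂₂]
  have hInvOf : ⅟ (Matrix.blockDiagonal' Dl) = Matrix.blockDiagonal' Dinv := rfl
  -- compute the rank structure
  have h1 : Matrix.blockDiagonal' Dinv * C
      = Matrix.of fun (p : Σ l, Fin (t l)) j =>
          if j = p.1 then μ j * ((Dinv p.1 *ᵥ v p.1) p.2) else 0 := by
    ext ⟨l, a⟩ j
    rw [Matrix.mul_apply]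
    rw [← Finset.univ_sigma_univ, Finset.sum_sigma]
    rw [Finset.sum_eq_single l]
    · by_cases h : j = l
      · subst h
        simp [hCdef, Matrix.mulVec, dotProduct, Finset.mul_sum, mul_comm, mul_left_comm,
          mul_assoc]
      · simp [hCdef, h]
    · intro m _ hm
      apply Finset.sum_eq_zero
      intro b _
      rw [Matrix.blockDiagonal'_apply_ne _ _ _ (Ne.symm hm), zero_mul]
    · intro h
      exact absurd (Finset.mem_univ l) h
  have h2 : B * (Matrix.blockDiagonal' Dinv * C)
      = Matrix.diagonal (fun l => v l ⬝ᵥ (Dinv l *ᵥ v l)) := by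
    rw [h1]
    ext i j
    rw [Matrix.mul_apply]
    rw [← Finset.univ_sigma_univ, Finset.sum_sigma]
    rw [Finset.sum_eq_single i]
    · by_cases h : j = i
      · subst h
        simp only [hBdef, Matrix.of_apply, Matrix.diagonal_apply_eq, eq_self_iff_true,
          if_true]
        rw [dotProduct]
        refine Finset.sum_congr rfl fun a _ => ?_
        rcases hμ j with h | h <;> rw [h] <;> ring
      · simp [hBdef, h, Matrix.diagonal_apply_ne' _ h]
    · intro m _ hm
      apply Finset.sum_eq_zero
      intro b _
      simp [hBdef, Ne.symm hm]
    · intro h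
      exact absurd (Finset.mem_univ i) h
  rw [hInvOf]
  simp only [Matrix.neg_mul, Matrix.mul_neg, neg_neg]
  rw [Matrix.mul_assoc, h2, det_blockDiagonal'_fin]
  congr 1
  congr 1
  ext i j
  by_cases h : i = j
  · subst h
    simp [Matrix.sub_apply, Matrix.add_apply, Matrix.smul_apply, Matrix.one_apply, hDinv, hDl]
    ring
  · simp [Matrix.sub_apply, Matrix.add_apply, Matrix.smul_apply, Matrix.one_apply, h,
      Matrix.diagonal_apply_ne _ h]
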